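/- For all integers d ≥ 0, the polynomial (m+1)^{d+1} − m^{d+1} ∈ ℂ[m] has all of its roots on the line Re(z) = −1/2. -/

import Mathlib

/-! A root `z` satisfies `(z + 1) ^ (d + 1) = z ^ (d + 1)`, so taking absolute values `|z + 1| = |z|`:
`z` is equidistant from `0` and `-1`, i.e. it lies on the perpendicular bisector `Re z = -1/2`. -/

open Polynomial

lemma add_one_pow_eq_pow_of_mem_roots {R : Type*} [CommRing R] [IsDomain R] {n : ℕ} {z : R}
    (hz : z ∈ ((X + 1) ^ n - X ^ n : R[X]).roots) : (z + 1) ^ n = z ^ n := by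
  simpa [sub_eq_zero] using (mem_roots'.1 hz).2

lemma norm_eq_norm_of_pow_eq_pow {𝕜 : Type*} [NormedDivisionRing 𝕜] {n : ℕ} (hn : n ≠ 0)
    {a b : 𝕜} (h : a ^ n = b ^ n) : ‖a‖ = ‖b‖ :=
  (pow_left_strictMonoOn₀ hn).injOn (norm_nonneg a) (norm_nonneg b) <| by
    simp only [← norm_pow, h]

lemma Complex.norm_add_one_eq_norm_iff {z : ℂ} : ‖z + 1‖ = ‖z‖ ↔ z.re = -1 / 2 := by
  rw [← sq_eq_sq₀ (norm_nonneg _) (norm_nonneg _), Complex.sq_norm, Complex.sq_norm,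
    Complex.normSq_apply, Complex.normSq_apply]
  simp only [Complex.add_re, Complex.one_re, Complex.add_im, Complex.one_im, add_zero]
  constructor <;> intro h <;> linarith

theorem dual_typeA_roots_on_critical_line (d : ℕ) :
    ∀ z ∈ ((Polynomial.X + 1) ^ (d + 1) - Polynomial.X ^ (d + 1) : Polynomial ℂ).roots,
      z.re = -1/2 := fun _ hz =>
  Complex.norm_add_one_eq_norm_iff.1 <|
    norm_eq_norm_of_pow_eq_pow d.succ_ne_zero (add_one_pow_eq_pow_of_mem_roots hz)
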